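/- Let M be the tridiagonal (Jacobi) operator on ℓ^∞(ℕ) with M(i, i−1) = a for i ≥ 1, M(i,i) = b, M(i, i+1) = c for i ≥ 0, where a, b, c > 0, and all other entries zero. Then for all i, j and n, the entries of M^n satisfy (M^n)_{ij} ≤ (b + 2√(ac))^n · √(c/a)^{\,j−i} (interpreting √(c/a)^{j−i} with sign of j−i), and in particular limsup_n ((M^n)_{ii})^{1/n} ≤ b + 2√(ac). -/

import Mathlib

open Filter

/-- Product of two infinite nonnegative matrices indexed by `ℕ` (entrywise `tsum`). -/
noncomputable def infMul (A B : ℕ → ℕ → ℝ) : ℕ → ℕ → ℝ :=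
  fun i j => ∑' k, A i k * B k j

/-- `n`-th power of an infinite matrix indexed by `ℕ`. -/
noncomputable def infPow (M : ℕ → ℕ → ℝ) : ℕ → ℕ → ℕ → ℝ
  | 0 => fun i j => if i = j then 1 else 0
  | n + 1 => infMul (infPow M n) M

/-- For the tridiagonal operator with sub-diagonal `a`, diagonal `b` and
super-diagonal `c` (and an absorbing barrier at `0`), the entries of `M^n` satisfy
`(M^n)_{ij} ≤ (b + 2√(ac))^n (√(c/a))^{j-i}`; in particular
`limsup_n ((M^n)_{ii})^{1/n} ≤ b + 2√(ac)`. -/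
theorem stmt_10 (a b c : ℝ) (ha : 0 < a) (hb : 0 < b) (hc : 0 < c)
    (M : ℕ → ℕ → ℝ)
    (hM : ∀ i j, M i j =
      if j + 1 = i then a else if j = i then b else if j = i + 1 then c else 0) :
    (∀ n i j, infPow M n i j ≤
      (b + 2 * Real.sqrt (a * c)) ^ n * Real.sqrt (c / a) ^ ((j : ℤ) - (i : ℤ))) ∧
      ∀ i, Filter.limsup (fun n : ℕ => (infPow M n i i) ^ ((n : ℝ)⁻¹)) atTop ≤
        b + 2 * Real.sqrt (a * c) := by
  set ρ : ℝ := b + 2 * Real.sqrt (a * c) with hρdef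
  set R : ℝ := Real.sqrt (c / a) with hRdef
  have hsqnn : (0:ℝ) ≤ Real.sqrt (a * c) := Real.sqrt_nonneg _
  have hρ : 0 < ρ := by positivity
  have hR : 0 < R := Real.sqrt_pos.mpr (by positivity)
  -- key algebraic identities
  have haR : a * R = Real.sqrt (a * c) := by
    rw [hRdef, ← Real.sqrt_sq ha.le, ← Real.sqrt_mul (by positivity)]
    congr 1
    field_simp
    simp only [Real.sqrt_sq ha.le]
  have hR2 : R ^ 2 = c / a := Real.sq_sqrt (by positivity)
  have hcR : c + R ^ 2 * a = 2 * Real.sqrt (a * c) * R := by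
    have h1 : R ^ 2 * a = c := by rw [hR2]; field_simp
    have h2 : Real.sqrt (a * c) * R = c := by
      rw [← haR]; nlinarith [h1]
    nlinarith [h1, h2]
  have hMnn : ∀ i j, 0 ≤ M i j := by
    intro i j; rw [hM]; split_ifs <;> linarith
  have hPnn : ∀ n i j, 0 ≤ infPow M n i j := by
    intro n
    induction n with
    | zero => intro i j; simp only [infPow]; split_ifs <;> norm_num
    | succ n ih =>
      intro i j
      exact tsum_nonneg fun k => mul_nonneg (ih i k) (hMnn k j)
  have key : ∀ n i j, infPow M n i j ≤ ρ ^ n * R ^ ((j : ℤ) - (i : ℤ)) := by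
    intro n
    induction n with
    | zero =>
      intro i j
      simp only [infPow, pow_zero, one_mul]
      split_ifs with h
      · subst h; simp
      · exact (zpow_pos hR _).le
    | succ n ih =>
      intro i j
      have hunfold : infPow M (n + 1) i j = ∑' k, infPow M n i k * M k j := rfl
      rw [hunfold]
      cases j with
      | zero =>
        have hsum : ∑' k, infPow M n i k * M k 0
            = infPow M n i 0 * b + infPow M n i 1 * a := by
          rw [tsum_eq_sum (s := ({0, 1} : Finset ℕ)) ?_]
          · rw [Finset.sum_pair (by norm_num)]
            rw [hM 0 0, hM 1 0]
            norm_num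
          · intro k hk
            simp only [Finset.mem_insert, Finset.mem_singleton, not_or] at hk
            have : M k 0 = 0 := by
              rw [hM]
              split_ifs with h1 h2 h3
              · exact absurd h1 (by omega)
              · exact absurd h2 (by omega)
              · exact h3.elim
              · rfl
            rw [this, mul_zero]
        rw [hsum]
        set t : ℝ := R ^ ((0:ℤ) - (i:ℤ)) with htdef
        have ht : 0 < t := zpow_pos hR _
        have e1 : R ^ ((1:ℤ) - (i:ℤ)) = t * R := by
          rw [htdef, ← zpow_add_one₀ hR.ne']
          congr 1; ring
        have h1 : infPow M n i 0 ≤ ρ ^ n * t := by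
          have := ih i 0
          rwa [Nat.cast_zero] at this
        have h2 : infPow M n i 1 ≤ ρ ^ n * (t * R) := by
          have := ih i 1
          rw [show ((1:ℕ):ℤ) = (1:ℤ) by norm_num] at this
          rw [e1] at this; exact this
        have hρn : (0:ℝ) ≤ ρ ^ n := (pow_pos hρ n).le
        have step : infPow M n i 0 * b + infPow M n i 1 * a
            ≤ ρ ^ n * t * b + ρ ^ n * (t * R) * a :=
          add_le_add (mul_le_mul_of_nonneg_right h1 hb.le)
            (mul_le_mul_of_nonneg_right h2 ha.le)
        have eq1 : ρ ^ n * (t * R) * a = ρ ^ n * t * Real.sqrt (a * c) := by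
          rw [← haR]; ring
        have hnt : 0 ≤ ρ ^ n * t := mul_nonneg hρn ht.le
        have expand : ρ ^ (n+1) * t
            = ρ ^ n * t * b + 2 * (ρ ^ n * t * Real.sqrt (a * c)) := by
          rw [pow_succ, hρdef]; ring
        have final : ρ ^ n * t * b + ρ ^ n * (t * R) * a ≤ ρ ^ (n+1) * t := by
          rw [eq1, expand]
          linarith [mul_nonneg hnt hsqnn]
        calc infPow M n i 0 * b + infPow M n i 1 * a
            ≤ ρ ^ n * t * b + ρ ^ n * (t * R) * a := step
          _ ≤ ρ ^ (n+1) * t := final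
          _ = ρ ^ (n+1) * R ^ (((0:ℕ):ℤ) - (i:ℤ)) := by rw [Nat.cast_zero]
      | succ m =>
        have hsum : ∑' k, infPow M n i k * M k (m+1)
            = infPow M n i m * c + infPow M n i (m+1) * b + infPow M n i (m+2) * a := by
          rw [tsum_eq_sum (s := ({m, m+1, m+2} : Finset ℕ)) ?_]
          · rw [Finset.sum_insert (by simp), Finset.sum_insert (by simp),
              Finset.sum_singleton]
            rw [hM m (m+1), hM (m+1) (m+1), hM (m+2) (m+1)]
            have e1 : ¬ (m + 1 + 1 = m) := by omega
            have e2 : ¬ (m + 1 = m) := by omega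
            have e3 : ¬ (m + 1 + 1 = m + 1) := by omega
            have e4 : ¬ (m + 1 = m + 2) := by omega
            simp only [e1, e2, e3, e4, if_true, if_false, ite_true, ite_false, if_pos rfl]
            ring
          · intro k hk
            simp only [Finset.mem_insert, Finset.mem_singleton, not_or] at hk
            have : M k (m+1) = 0 := by
              rw [hM]
              split_ifs with h1 h2 h3
              · exact absurd h1 (by omega)
              · exact absurd h2 (by omega)
              · exact absurd h3 (by omega)
              · rfl
            rw [this, mul_zero]
        rw [hsum]
        set t : ℝ := R ^ ((m:ℤ) - (i:ℤ)) with htdef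
        have ht : 0 < t := zpow_pos hR _
        have e1 : R ^ (((m:ℤ)+1) - (i:ℤ)) = t * R := by
          rw [htdef, ← zpow_add_one₀ hR.ne']
          congr 1; ring
        have e2 : R ^ (((m:ℤ)+2) - (i:ℤ)) = t * R * R := by
          rw [htdef, ← zpow_add_one₀ hR.ne', ← zpow_add_one₀ hR.ne']
          congr 1; ring
        have h1 : infPow M n i m ≤ ρ ^ n * t := ih i m
        have h2 : infPow M n i (m+1) ≤ ρ ^ n * (t * R) := by
          have := ih i (m+1)
          rw [show ((m+1:ℕ):ℤ) = (m:ℤ)+1 by push_cast; ring, e1] at this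
          exact this
        have h3 : infPow M n i (m+2) ≤ ρ ^ n * (t * R * R) := by
          have := ih i (m+2)
          rw [show ((m+2:ℕ):ℤ) = (m:ℤ)+2 by push_cast; ring, e2] at this
          exact this
        have hρn : (0:ℝ) ≤ ρ ^ n := (pow_pos hρ n).le
        have step : infPow M n i m * c + infPow M n i (m+1) * b + infPow M n i (m+2) * a
            ≤ ρ ^ n * t * c + ρ ^ n * (t * R) * b + ρ ^ n * (t * R * R) * a :=
          add_le_add (add_le_add (mul_le_mul_of_nonneg_right h1 hc.le)
            (mul_le_mul_of_nonneg_right h2 hb.le))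
            (mul_le_mul_of_nonneg_right h3 ha.le)
        have final : ρ ^ n * t * c + ρ ^ n * (t * R) * b + ρ ^ n * (t * R * R) * a
            = ρ ^ (n+1) * (t * R) := by
          rw [pow_succ, hρdef]
          linear_combination ((b + 2 * Real.sqrt (a * c)) ^ n * t) * hcR
        calc infPow M n i m * c + infPow M n i (m+1) * b + infPow M n i (m+2) * a
            ≤ ρ ^ n * t * c + ρ ^ n * (t * R) * b + ρ ^ n * (t * R * R) * a := step
          _ = ρ ^ (n+1) * (t * R) := final
          _ = ρ ^ (n+1) * R ^ (((m+1:ℕ):ℤ) - (i:ℤ)) := by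
              rw [show ((m+1:ℕ):ℤ) = (m:ℤ) + 1 by push_cast; ring, e1]
  refine ⟨key, fun i => ?_⟩
  apply Filter.limsup_le_of_le
  · exact Filter.isCoboundedUnder_le_of_le atTop
      (fun n => Real.rpow_nonneg (hPnn n i i) _)
  · filter_upwards [eventually_ge_atTop 1] with n hn
    have h1 : infPow M n i i ≤ ρ ^ n := by
      have := key n i i
      simpa using this
    have h2 : (infPow M n i i) ^ ((n:ℝ)⁻¹) ≤ (ρ ^ n) ^ ((n:ℝ)⁻¹) :=
      Real.rpow_le_rpow (hPnn n i i) h1 (by positivity)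
    have h3 : ((ρ:ℝ) ^ n) ^ ((n:ℝ)⁻¹) = ρ := by
      rw [← Real.rpow_natCast ρ n, ← Real.rpow_mul hρ.le]
      rw [mul_inv_cancel₀ (by exact_mod_cast Nat.one_le_iff_ne_zero.mp hn : ((n:ℝ) ≠ 0))]
      exact Real.rpow_one ρ
    calc (infPow M n i i) ^ ((n:ℝ)⁻¹) ≤ (ρ ^ n) ^ ((n:ℝ)⁻¹) := h2
      _ = ρ := h3
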